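/- arXiv:1108.2451 — 3 statements merged into one kernel-verified Lean document; each statement's English description precedes it below -/
import Mathlib

section
/- If B is a minimal ideal of a Leibniz algebra A, then either BA = 0 or ba = -ab for all a in A and all b in B. -/
namespace Leib

variable {K : Type*} [Field K] {A : Type*} [AddCommGroup A] [Module K A]

variable (mul : A →ₗ[K] A →ₗ[K] A)

/-- The (left) Leibniz identity: left multiplication is a derivation. -/
def IsLeibniz : Prop :=
  ∀ x y z : A, mul x (mul y z) = mul (mul x y) z + mul y (mul x z)

/-- The product of two submodules: the span of all products. -/
def prodSM (B C : Submodule K A) : Submodule K A :=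
  Submodule.span K {z | ∃ b ∈ B, ∃ c ∈ C, z = mul b c}

/-- A subalgebra: a submodule closed under multiplication. -/
def IsSubalg (S : Submodule K A) : Prop :=
  ∀ x ∈ S, ∀ y ∈ S, mul x y ∈ S

/-- A (two-sided) ideal. -/
def IsIdeal (B : Submodule K A) : Prop :=
  ∀ a : A, ∀ b ∈ B, mul a b ∈ B ∧ mul b a ∈ B

/-- An abelian subspace: all products vanish. -/
def IsAbelian (B : Submodule K A) : Prop :=
  ∀ x ∈ B, ∀ y ∈ B, mul x y = 0

/-- A minimal ideal. -/
def IsMinIdeal (B : Submodule K A) : Prop :=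
  IsIdeal mul B ∧ B ≠ ⊥ ∧ ∀ C : Submodule K A, IsIdeal mul C → C ≤ B → C = ⊥ ∨ C = B

/-- Lower central series of a subalgebra `B`: `B, B·B, B·(B·B), ...`. -/
def lcsOf (B : Submodule K A) : ℕ → Submodule K A
  | 0 => B
  | n + 1 => prodSM mul B (lcsOf B n)

/-- A nilpotent subalgebra. -/
def IsNilpotentSubalg (B : Submodule K A) : Prop := ∃ n, lcsOf mul B n = ⊥

/-- A nilpotent algebra. -/
def IsNilpotentAlg : Prop := ∃ n, lcsOf mul ⊤ n = ⊥

/-- Derived series of a subalgebra. -/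
def derOf (B : Submodule K A) : ℕ → Submodule K A
  | 0 => B
  | n + 1 => prodSM mul (derOf B n) (derOf B n)

/-- A solvable subalgebra. -/
def IsSolvableSubalg (B : Submodule K A) : Prop := ∃ n, derOf mul B n = ⊥

/-- A solvable algebra. -/
def IsSolvableAlg : Prop := ∃ n, derOf mul ⊤ n = ⊥

/-- A semisimple algebra: no nonzero solvable ideal. -/
def IsSemisimpleAlg : Prop :=
  ∀ B : Submodule K A, IsIdeal mul B → IsSolvableSubalg mul B → B = ⊥

/-- The nilradical: the largest nilpotent ideal (here: the sup of all nilpotent ideals). -/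
def nilrad : Submodule K A :=
  sSup {B : Submodule K A | IsIdeal mul B ∧ IsNilpotentSubalg mul B}

/-- The socle: the sum of all minimal ideals. -/
def socle : Submodule K A := sSup {B : Submodule K A | IsMinIdeal mul B}

/-- The abelian socle: the sum of all abelian minimal ideals. -/
def asocle : Submodule K A :=
  sSup {B : Submodule K A | IsMinIdeal mul B ∧ IsAbelian mul B}

/-- The centralizer of a subspace `W`: elements annihilating `W` on both sides. -/
def centralizer (W : Submodule K A) : Submodule K A where
  carrier := {x | ∀ w ∈ W, mul x w = 0 ∧ mul w x = 0}
  add_mem' := by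
    intro a b ha hb w hw
    constructor
    · simp [map_add, (ha w hw).1, (hb w hw).1]
    · simp [map_add, (ha w hw).2, (hb w hw).2]
  zero_mem' := by intro w hw; simp
  smul_mem' := by
    intro c a ha w hw
    constructor
    · simp [map_smul, (ha w hw).1]
    · simp [map_smul, (ha w hw).2]

/-- The center of the algebra. -/
def center : Submodule K A := centralizer mul ⊤

/-- A maximal (proper) subalgebra of a subalgebra `M`. -/
def IsMaxSubalgIn (M S : Submodule K A) : Prop :=
  S ≤ M ∧ IsSubalg mul S ∧ S ≠ M ∧
    ∀ T : Submodule K A, T ≤ M → IsSubalg mul T → S ≤ T → T = S ∨ T = M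

/-- The Frattini subalgebra of `M`: the intersection of its maximal subalgebras
(equal to `M` if there are none). -/
def frattiniSubalgIn (M : Submodule K A) : Submodule K A :=
  M ⊓ sInf {S : Submodule K A | IsMaxSubalgIn mul M S}

/-- An ideal of the subalgebra `M`. -/
def IsIdealIn (M C : Submodule K A) : Prop :=
  C ≤ M ∧ ∀ x ∈ M, ∀ c ∈ C, mul x c ∈ C ∧ mul c x ∈ C

/-- The Frattini ideal of `M`: the largest ideal of `M` contained in its
Frattini subalgebra. -/
def frattiniIdealIn (M : Submodule K A) : Submodule K A :=
  sSup {C : Submodule K A | IsIdealIn mul M C ∧ C ≤ frattiniSubalgIn mul M}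

/-- The Frattini subalgebra of the algebra. -/
def frattiniSubalg : Submodule K A := frattiniSubalgIn mul ⊤

/-- The Frattini ideal of the algebra. -/
def frattiniIdeal : Submodule K A := frattiniIdealIn mul ⊤

/-- An elementary algebra: every subalgebra has zero Frattini ideal. -/
def IsElementary : Prop :=
  ∀ M : Submodule K A, IsSubalg mul M → frattiniIdealIn mul M = ⊥

/-- The derived subalgebra `A² = A·A`. -/
def derivedSubalg : Submodule K A := prodSM mul ⊤ ⊤

/-- A Cartan subalgebra: a nilpotent, self-normalizing subalgebra. -/
def IsCartan (H : Submodule K A) : Prop :=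
  IsSubalg mul H ∧ IsNilpotentSubalg mul H ∧
    ∀ x : A, (∀ h ∈ H, mul x h ∈ H ∧ mul h x ∈ H) → x ∈ H

end Leib

open Leib

variable {K : Type*} [Field K] {A : Type*} [AddCommGroup A] [Module K A]
variable (mul : A →ₗ[K] A →ₗ[K] A)

/-- If `B` is a minimal ideal of a Leibniz algebra `A`, then either `BA = 0` or
`ba = -ab` for all `a ∈ A`, `b ∈ B`. -/
theorem stmt0 (hleib : IsLeibniz mul) (B : Submodule K A) (hB : IsMinIdeal mul B) :
    prodSM mul B ⊤ = ⊥ ∨ ∀ a : A, ∀ b ∈ B, mul b a = - mul a b := by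
  set C : Submodule K A :=
    Submodule.span K {z | ∃ a : A, ∃ b ∈ B, z = mul b a + mul a b} with hC
  -- key: generators of C left-annihilate everything
  have key : ∀ x y z : A, mul (mul x y + mul y x) z = 0 := by
    intro x y z
    have h1 := hleib x y z
    have h2 := hleib y x z
    have e1 : mul (mul x y) z = mul x (mul y z) - mul y (mul x z) := by rw [h1]; abel
    have e2 : mul (mul y x) z = mul y (mul x z) - mul x (mul y z) := by rw [h2]; abel
    simp only [map_add, LinearMap.add_apply, e1, e2]
    abel
  have hCkill : ∀ c ∈ C, ∀ z : A, mul c z = 0 := by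
    intro c hc z
    have : C ≤ LinearMap.ker (mul.flip z) := by
      rw [hC, Submodule.span_le]
      rintro _ ⟨a, b, hb, rfl⟩
      simp only [SetLike.mem_coe, LinearMap.mem_ker, LinearMap.flip_apply]
      exact key b a z
    simpa using this hc
  have hCB : C ≤ B := by
    rw [hC, Submodule.span_le]
    rintro _ ⟨a, b, hb, rfl⟩
    exact B.add_mem ((hB.1 a b hb).2) ((hB.1 a b hb).1)
  have hCideal : IsIdeal mul C := by
    intro x c hc
    refine ⟨?_, by rw [hCkill c hc x]; exact C.zero_mem⟩
    have : C ≤ Submodule.comap (mul x) C := by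
      rw [hC, Submodule.span_le]
      rintro _ ⟨a, b, hb, rfl⟩
      simp only [SetLike.mem_coe, Submodule.mem_comap, map_add]
      have e1 : mul x (mul b a) = mul (mul x b) a + mul b (mul x a) := hleib x b a
      have e2 : mul x (mul a b) = mul (mul x a) b + mul a (mul x b) := hleib x a b
      rw [e1, e2]
      have g1 : mul (mul x b) a + mul a (mul x b) ∈ C :=
        Submodule.subset_span ⟨a, mul x b, (hB.1 x b hb).1, rfl⟩
      have g2 : mul b (mul x a) + mul (mul x a) b ∈ C :=
        Submodule.subset_span ⟨mul x a, b, hb, rfl⟩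
      have := C.add_mem g1 g2
      convert this using 1
      abel
    exact this hc
  rcases hB.2.2 C hCideal hCB with h0 | hCeq
  · right
    intro a b hb
    have : mul b a + mul a b ∈ C := Submodule.subset_span ⟨a, b, hb, rfl⟩
    rw [h0, Submodule.mem_bot] at this
    exact eq_neg_of_add_eq_zero_left this
  · left
    rw [prodSM, Submodule.span_eq_bot.mpr]
    rintro _ ⟨b, hb, c, -, rfl⟩
    exact hCkill b (hCeq ▸ hb) c
end

section
/- Let A be a Leibniz algebra and B a minimal ideal of A. Then the nilradical Nil(A) is contained in the centralizer Z_A(B) = {x ∈ A : xB = 0 = Bx}. -/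
open Leib

variable {K : Type*} [Field K] {A : Type*} [AddCommGroup A] [Module K A]
variable (mul : A →ₗ[K] A →ₗ[K] A)

lemma mem_prodSM' {B C : Submodule K A} {b c : A} (hb : b ∈ B) (hc : c ∈ C) :
    mul b c ∈ prodSM mul B C :=
  Submodule.subset_span ⟨b, hb, c, hc, rfl⟩

lemma prodSM_le' {B C D : Submodule K A}
    (h : ∀ b ∈ B, ∀ c ∈ C, mul b c ∈ D) : prodSM mul B C ≤ D := by
  apply Submodule.span_le.mpr
  rintro z ⟨b, hb, c, hc, rfl⟩
  exact h b hb c hc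

lemma prodSM_mono' {B B' C C' : Submodule K A} (h1 : B ≤ B') (h2 : C ≤ C') :
    prodSM mul B C ≤ prodSM mul B' C' :=
  prodSM_le' mul fun b hb c hc => mem_prodSM' mul (h1 hb) (h2 hc)

lemma prodSM_apply_le' {B C D : Submodule K A} (f : A →ₗ[K] A)
    (h : ∀ b ∈ B, ∀ c ∈ C, f (mul b c) ∈ D) :
    ∀ x ∈ prodSM mul B C, f x ∈ D := by
  intro x hx
  exact (prodSM_le' mul (D := D.comap f) h) hx

lemma prodSM_assoc' (hleib : IsLeibniz mul) (X Y Z : Submodule K A) :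
    prodSM mul (prodSM mul X Y) Z ≤
      prodSM mul X (prodSM mul Y Z) ⊔ prodSM mul Y (prodSM mul X Z) := by
  apply prodSM_le'
  intro w hw z hz
  refine prodSM_apply_le' mul (mul.flip z) ?_ w hw
  intro x hx y hy
  simp only [LinearMap.flip_apply]
  have key : mul (mul x y) z = mul x (mul y z) - mul y (mul x z) :=
    eq_sub_of_add_eq (hleib x y z).symm
  rw [key]
  exact sub_mem
    (Submodule.mem_sup_left (mem_prodSM' mul hx (mem_prodSM' mul hy hz)))
    (Submodule.mem_sup_right (mem_prodSM' mul hy (mem_prodSM' mul hx hz)))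

lemma lcs_mul' (hleib : IsLeibniz mul) (N : Submodule K A) :
    ∀ i j, prodSM mul (lcsOf mul N i) (lcsOf mul N j) ≤ lcsOf mul N (i + j + 1) := by
  intro i
  induction i with
  | zero =>
    intro j
    simp only [Nat.zero_add, lcsOf]
    exact le_rfl
  | succ i ih =>
    intro j
    have h1 : lcsOf mul N (i + 1) = prodSM mul N (lcsOf mul N i) := rfl
    rw [h1]
    refine le_trans (prodSM_assoc' mul hleib _ _ _) (sup_le ?_ ?_)
    · have : prodSM mul N (prodSM mul (lcsOf mul N i) (lcsOf mul N j)) ≤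
          prodSM mul N (lcsOf mul N (i + j + 1)) :=
        prodSM_mono' mul le_rfl (ih j)
      refine le_trans this (le_of_eq ?_)
      show lcsOf mul N (i + j + 1 + 1) = _
      congr 1
      omega
    · have h2 : prodSM mul N (lcsOf mul N j) = lcsOf mul N (j + 1) := rfl
      rw [h2]
      refine le_trans (ih (j + 1)) (le_of_eq ?_)
      congr 1
      omega

/-- The nilradical is contained in the centralizer of any minimal ideal. -/
theorem stmt3 (hleib : IsLeibniz mul) (B : Submodule K A) (hB : IsMinIdeal mul B) :
    nilrad mul ≤ centralizer mul B := by
  apply sSup_le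
  rintro N ⟨hNideal, n, hNnil⟩
  set C := prodSM mul N B ⊔ prodSM mul B N with hC
  have hCB : C ≤ B :=
    sup_le (prodSM_le' mul fun x hx b hb => (hB.1 x b hb).1)
      (prodSM_le' mul fun b hb x hx => (hB.1 x b hb).2)
  have hCN : C ≤ N :=
    sup_le (prodSM_le' mul fun x hx b hb => (hNideal b x hx).2)
      (prodSM_le' mul fun b hb x hx => (hNideal b x hx).1)
  have hCideal : IsIdeal mul C := by
    intro a c hc
    rcases Submodule.mem_sup.mp hc with ⟨p, hp, q, hq, rfl⟩
    constructor
    · rw [map_add]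
      refine add_mem ?_ ?_
      · refine prodSM_apply_le' mul (mul a) ?_ p hp
        intro x hx b hb
        rw [hleib a x b]
        exact add_mem
          (Submodule.mem_sup_left (mem_prodSM' mul (hNideal a x hx).1 hb))
          (Submodule.mem_sup_left (mem_prodSM' mul hx (hB.1 a b hb).1))
      · refine prodSM_apply_le' mul (mul a) ?_ q hq
        intro b hb x hx
        rw [hleib a b x]
        exact add_mem
          (Submodule.mem_sup_right (mem_prodSM' mul (hB.1 a b hb).1 hx))
          (Submodule.mem_sup_right (mem_prodSM' mul hb (hNideal a x hx).1))
    · have : mul (p + q) a = mul.flip a p + mul.flip a q := by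
        simp [map_add]
      rw [this]
      refine add_mem ?_ ?_
      · refine prodSM_apply_le' mul (mul.flip a) ?_ p hp
        intro x hx b hb
        simp only [LinearMap.flip_apply]
        have key : mul (mul x b) a = mul x (mul b a) - mul b (mul x a) :=
          eq_sub_of_add_eq (hleib x b a).symm
        rw [key]
        exact sub_mem
          (Submodule.mem_sup_left (mem_prodSM' mul hx (hB.1 a b hb).2))
          (Submodule.mem_sup_right (mem_prodSM' mul hb (hNideal a x hx).2))
      · refine prodSM_apply_le' mul (mul.flip a) ?_ q hq
        intro b hb x hx
        simp only [LinearMap.flip_apply]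
        have key : mul (mul b x) a = mul b (mul x a) - mul x (mul b a) :=
          eq_sub_of_add_eq (hleib b x a).symm
        rw [key]
        exact sub_mem
          (Submodule.mem_sup_right (mem_prodSM' mul hb (hNideal a x hx).2))
          (Submodule.mem_sup_left (mem_prodSM' mul hx (hB.1 a b hb).2))
    
  rcases hB.2.2 C hCideal hCB with h0 | h1
  · intro x hx
    show ∀ w ∈ B, mul x w = 0 ∧ mul w x = 0
    intro w hw
    constructor
    · have : mul x w ∈ C := Submodule.mem_sup_left (mem_prodSM' mul hx hw)
      rw [h0] at this
      exact Submodule.mem_bot K |>.mp this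
    · have : mul w x ∈ C := Submodule.mem_sup_right (mem_prodSM' mul hw hx)
      rw [h0] at this
      exact Submodule.mem_bot K |>.mp this
  · exfalso
    have hBN : B ≤ N := h1 ▸ hCN
    have key : ∀ k, B ≤ lcsOf mul N k := by
      intro k
      induction k with
      | zero => exact hBN
      | succ k ih =>
        have hBC : B ≤ C := le_of_eq h1.symm
        refine le_trans hBC (sup_le ?_ ?_)
        · exact le_trans (prodSM_mono' mul le_rfl ih) le_rfl
        · have : prodSM mul B N ≤ prodSM mul (lcsOf mul N k) (lcsOf mul N 0) :=
            prodSM_mono' mul ih le_rfl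
          exact le_trans this (lcs_mul' mul hleib N k 0)
    have : B ≤ ⊥ := hNnil ▸ key n
    exact hB.2.1 (le_bot_iff.mp this)
end

section
/- Let A be an algebra and B an ideal of A. If U is a subalgebra of A which is minimal with respect to the property A = B + U, then B ∩ U ⊆ Φ(U). -/
open Leib

variable {K : Type*} [Field K] {A : Type*} [AddCommGroup A] [Module K A]
variable (mul : A →ₗ[K] A →ₗ[K] A)

/-- If `B` is an ideal of an algebra `A` and `U` is minimal among subalgebras with
`A = B + U`, then `B ∩ U ⊆ Φ(U)`. -/
theorem stmt16 [FiniteDimensional K A] (B U : Submodule K A)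
    (hB : IsIdeal mul B) (hU : IsSubalg mul U) (hBU : B ⊔ U = ⊤)
    (hmin : ∀ V : Submodule K A, IsSubalg mul V → V ≤ U → B ⊔ V = ⊤ → V = U) :
    B ⊓ U ≤ frattiniIdealIn mul U := by
  -- B ⊓ U is an ideal of U
  have hideal : IsIdealIn mul U (B ⊓ U) := by
    refine ⟨inf_le_right, fun x hx c hc => ?_⟩
    obtain ⟨hcB, hcU⟩ := hc
    exact ⟨⟨(hB x c hcB).1, hU x hx c hcU⟩, ⟨(hB x c hcB).2, hU c hcU x hx⟩⟩
  -- B ⊓ U is contained in the Frattini subalgebra of U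
  have hfr : B ⊓ U ≤ frattiniSubalgIn mul U := by
    refine le_inf inf_le_right (le_sInf fun S hS => ?_)
    obtain ⟨hSU, hSsub, hSne, hSmax⟩ := hS
    set T := S ⊔ (B ⊓ U) with hT
    have hTU : T ≤ U := sup_le hSU inf_le_right
    have hTsub : IsSubalg mul T := by
      intro x hx y hy
      rw [hT, Submodule.mem_sup] at hx hy
      obtain ⟨s, hs, c, hc, rfl⟩ := hx
      obtain ⟨s', hs', c', hc', rfl⟩ := hy
      have h1 : mul s s' ∈ S := hSsub s hs s' hs'
      have h2 : mul s c' ∈ B ⊓ U := (hideal.2 s (hSU hs) c' hc').1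
      have h3 : mul c s' ∈ B ⊓ U := (hideal.2 s' (hSU hs') c hc).2
      have h4 : mul c c' ∈ B ⊓ U := (hideal.2 c' (hideal.1 hc') c hc).2
      have : mul (s + c) (s' + c') =
          mul s s' + (mul s c' + (mul c s' + mul c c')) := by
        simp [map_add]; abel
      rw [this, hT]
      exact Submodule.add_mem _ (Submodule.mem_sup_left h1)
        (Submodule.mem_sup_right (add_mem h2 (add_mem h3 h4)))
    rcases hSmax T hTU hTsub le_sup_left with h | h
    · rw [← h]; exact le_sup_right
    · exfalso
      apply hSne
      apply hmin S hSsub hSU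
      have hUle : U ≤ B ⊔ S := by
        rw [← h, hT]
        exact sup_le le_sup_right (inf_le_left.trans le_sup_left)
      rw [eq_top_iff, ← hBU]
      exact sup_le le_sup_left hUle
  exact le_sSup ⟨hideal, hfr⟩
end
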